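/- Let s ∈ ℝ and a ∈ ℂⁿ. The Weyl operator W_a f(z) = f(z-a) e^{-|a|²/2 + z·ā} is bounded on the fractional Fock-Sobolev space F^{s,2}(ℂⁿ), and ‖W_a f‖_{F^{s,2}} ≤ C (1 + |a|^{|s|}) ‖f‖_{F^{s,2}} for all f ∈ F^{s,2}(ℂⁿ), with C independent of a and f. -/

import Mathlib

open MeasureTheory Complex ENNReal
noncomputable section

/-- ℂⁿ as complex Euclidean space. -/
abbrev Cn (n : ℕ) := EuclideanSpace ℂ (Fin n)

instance (n : ℕ) : MeasurableSpace (Cn n) := borel _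
instance (n : ℕ) : BorelSpace (Cn n) := ⟨rfl⟩
instance (n : ℕ) : MeasureSpace (Cn n) := ⟨Measure.addHaar⟩

/-- The weighted Fock–Sobolev integrand `(1+|z|)^{2s} |f(z)|² e^{-|z|²}`. -/
def fockIntegrand {n : ℕ} (s : ℝ) (f : Cn n → ℂ) : Cn n → ℝ := fun z =>
  (1 + ‖z‖) ^ (2 * s) * ‖f z‖ ^ 2 * Real.exp (-‖z‖ ^ 2)

/-- Membership in the fractional Fock–Sobolev space `F^{s,2}(ℂⁿ)`
(via the equivalent weighted norm of Cho–Park). -/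
def MemFock {n : ℕ} (s : ℝ) (f : Cn n → ℂ) : Prop :=
  Differentiable ℂ f ∧ Integrable (fockIntegrand s f) volume

/-- The (equivalent) weighted Fock–Sobolev norm. -/
def FockNorm {n : ℕ} (s : ℝ) (f : Cn n → ℂ) : ℝ :=
  Real.sqrt (∫ z : Cn n, fockIntegrand s f z)

/-- The Weyl operator `W_a f(z) = f(z-a) e^{-|a|²/2 + z·ā}`. -/
def weylOp {n : ℕ} (a : Cn n) (f : Cn n → ℂ) : Cn n → ℂ := fun z =>
  f (z - a) * Complex.exp (-(‖a‖ ^ 2 : ℝ) / 2 + (inner ℂ a z : ℂ))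

/-! ### Auxiliary lemmas -/

instance (n : ℕ) : (volume : Measure (Cn n)).IsAddRightInvariant :=
  (inferInstance : (Measure.addHaar : Measure (Cn n)).IsAddRightInvariant)

lemma fockIntegrand_nonneg {n : ℕ} (s : ℝ) (f : Cn n → ℂ) (z : Cn n) :
    0 ≤ fockIntegrand s f z := by
  unfold fockIntegrand; positivity

/-- The key pointwise identity for the Weyl operator. -/
lemma weyl_pointwise {n : ℕ} (s : ℝ) (a : Cn n) (f : Cn n → ℂ) (z : Cn n) :
    fockIntegrand s (weylOp a f) z
      = (1 + ‖z‖) ^ (2 * s) * (‖f (z - a)‖ ^ 2 * Real.exp (-‖z - a‖ ^ 2)) := by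
  unfold fockIntegrand weylOp
  rw [mul_assoc]
  congr 1
  have he : ‖Complex.exp (-(‖a‖ ^ 2 : ℝ) / 2 + (inner ℂ a z : ℂ))‖
      = Real.exp ((-(‖a‖ ^ 2 : ℝ) / 2 + (inner ℂ a z : ℂ)).re) := by
    rw [Complex.norm_exp]
  rw [norm_mul, he, mul_pow, mul_assoc, ← Real.exp_nat_mul, ← Real.exp_add]
  congr 2
  have h1 : ‖z - a‖ ^ 2 = ‖z‖ ^ 2 - 2 * RCLike.re (inner ℂ z a : ℂ) + ‖a‖ ^ 2 :=
    norm_sub_sq z a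
  have h2 : RCLike.re (inner ℂ a z : ℂ) = RCLike.re (inner ℂ z a : ℂ) := by
    rw [← inner_conj_symm a z]; exact RCLike.conj_re _
  have h4 : (-(‖a‖ ^ 2 : ℝ) / 2 + (inner ℂ a z : ℂ)).re
      = -‖a‖ ^ 2 / 2 + RCLike.re (inner ℂ a z : ℂ) := by
    have : (-(‖a‖ ^ 2 : ℝ) / 2 : ℂ) = ((-‖a‖ ^ 2 / 2 : ℝ) : ℂ) := by push_cast; ring
    rw [Complex.add_re, this, Complex.ofReal_re]; rfl
  rw [h4]
  nlinarith [h1, h2]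

/-- Elementary weight comparison. -/
lemma weight_comp {u v b s : ℝ} (hu : 1 ≤ u) (hv : 1 ≤ v) (hb : 1 ≤ b)
    (h1 : u ≤ v * b) (h2 : v ≤ u * b) :
    u ^ (2 * s) ≤ b ^ (2 * |s|) * v ^ (2 * s) := by
  have hu0 : (0:ℝ) < u := lt_of_lt_of_le one_pos hu
  have hv0 : (0:ℝ) < v := lt_of_lt_of_le one_pos hv
  have hb0 : (0:ℝ) < b := lt_of_lt_of_le one_pos hb
  rcases le_or_gt 0 s with hs | hs
  · rw [_root_.abs_of_nonneg hs]
    calc u ^ (2 * s) ≤ (v * b) ^ (2 * s) :=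
          Real.rpow_le_rpow hu0.le h1 (by linarith)
      _ = b ^ (2 * s) * v ^ (2 * s) := by
          rw [Real.mul_rpow hv0.le hb0.le]; ring
  · have habs : |s| = -s := abs_of_neg hs
    have hX : (0:ℝ) ≤ 2 * |s| := by positivity
    have key : v ^ (2 * |s|) ≤ u ^ (2 * |s|) * b ^ (2 * |s|) := by
      rw [← Real.mul_rpow hu0.le hb0.le]
      exact Real.rpow_le_rpow hv0.le h2 hX
    have hne : (2 : ℝ) * s = -(2 * |s|) := by rw [habs]; ring
    rw [hne, Real.rpow_neg hu0.le, Real.rpow_neg hv0.le]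
    have huX : (0:ℝ) < u ^ (2 * |s|) := Real.rpow_pos_of_pos hu0 _
    have hvX : (0:ℝ) < v ^ (2 * |s|) := Real.rpow_pos_of_pos hv0 _
    calc (u ^ (2 * |s|))⁻¹ = 1 / u ^ (2 * |s|) := (one_div _).symm
      _ ≤ b ^ (2 * |s|) / v ^ (2 * |s|) := by
          rw [div_le_div_iff₀ huX hvX]; nlinarith [key]
      _ = b ^ (2 * |s|) * (v ^ (2 * |s|))⁻¹ := div_eq_mul_inv _ _

/-- The pointwise domination. -/
lemma weyl_dominated {n : ℕ} (s : ℝ) (a : Cn n) (f : Cn n → ℂ) (z : Cn n) :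
    fockIntegrand s (weylOp a f) z
      ≤ (1 + ‖a‖) ^ (2 * |s|) * fockIntegrand s f (z - a) := by
  rw [weyl_pointwise]
  have hw : (1 + ‖z‖) ^ (2 * s)
      ≤ (1 + ‖a‖) ^ (2 * |s|) * (1 + ‖z - a‖) ^ (2 * s) := by
    apply weight_comp (by linarith [norm_nonneg z]) (by linarith [norm_nonneg (z - a)])
      (by linarith [norm_nonneg a])
    · have : ‖z‖ ≤ ‖z - a‖ + ‖a‖ := by
        simpa using norm_add_le (z - a) a
      nlinarith [norm_nonneg (z - a), norm_nonneg a]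
    · have : ‖z - a‖ ≤ ‖z‖ + ‖a‖ := norm_sub_le z a
      nlinarith [norm_nonneg z, norm_nonneg a]
  have hnn : (0:ℝ) ≤ ‖f (z - a)‖ ^ 2 * Real.exp (-‖z - a‖ ^ 2) := by positivity
  calc (1 + ‖z‖) ^ (2 * s) * (‖f (z - a)‖ ^ 2 * Real.exp (-‖z - a‖ ^ 2))
      ≤ ((1 + ‖a‖) ^ (2 * |s|) * (1 + ‖z - a‖) ^ (2 * s))
        * (‖f (z - a)‖ ^ 2 * Real.exp (-‖z - a‖ ^ 2)) :=
        mul_le_mul_of_nonneg_right hw hnn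
    _ = (1 + ‖a‖) ^ (2 * |s|) * fockIntegrand s f (z - a) := by
        unfold fockIntegrand; ring

lemma weyl_differentiable {n : ℕ} (a : Cn n) {f : Cn n → ℂ}
    (hf : Differentiable ℂ f) : Differentiable ℂ (weylOp a f) := by
  unfold weylOp
  apply Differentiable.mul
  · exact hf.comp (differentiable_id.sub_const a)
  · apply Differentiable.cexp
    apply Differentiable.const_add
    exact (innerSL ℂ a).differentiable

lemma fockIntegrand_continuous {n : ℕ} (s : ℝ) {f : Cn n → ℂ}
    (hf : Continuous f) : Continuous (fockIntegrand s f) := by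
  unfold fockIntegrand
  apply Continuous.mul
  · apply Continuous.mul
    · apply Continuous.rpow_const (continuous_const.add continuous_norm)
      intro z; left; have : (0:ℝ) < 1 + ‖z‖ := by positivity
      exact this.ne'
    · exact (hf.norm.pow 2)
  · exact Real.continuous_exp.comp ((continuous_norm.pow 2).neg)

/-- Elementary: `(1+t)^r ≤ 2^r (1+t^r)` for `t ≥ 0`, `r ≥ 0`. -/
lemma one_add_rpow_le {t r : ℝ} (ht : 0 ≤ t) (hr : 0 ≤ r) :
    (1 + t) ^ r ≤ 2 ^ r * (1 + t ^ r) := by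
  have h2 : (0:ℝ) ≤ 2 ^ r := (Real.rpow_pos_of_pos two_pos r).le
  rcases le_or_gt t 1 with h | h
  · calc (1 + t) ^ r ≤ 2 ^ r := Real.rpow_le_rpow (by linarith) (by linarith) hr
      _ = 2 ^ r * 1 := (mul_one _).symm
      _ ≤ 2 ^ r * (1 + t ^ r) := by
          have : (0:ℝ) ≤ t ^ r := Real.rpow_nonneg ht r
          nlinarith
  · calc (1 + t) ^ r ≤ (2 * t) ^ r :=
          Real.rpow_le_rpow (by linarith) (by linarith) hr
      _ = 2 ^ r * t ^ r := Real.mul_rpow (by norm_num) ht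
      _ ≤ 2 ^ r * (1 + t ^ r) := by nlinarith

/-- the Weyl operator `W_a` is bounded on `F^{s,2}(ℂⁿ)` with
`‖W_a f‖ ≤ C (1 + |a|^{|s|}) ‖f‖`, `C` independent of `a` and `f`. -/
theorem weyl_bounded_fockSobolev (n : ℕ) (s : ℝ) :
    ∃ C > (0 : ℝ), ∀ (a : Cn n) (f : Cn n → ℂ), MemFock s f →
      MemFock s (weylOp a f) ∧
      FockNorm s (weylOp a f) ≤ C * (1 + ‖a‖ ^ |s|) * FockNorm s f := by
  refine ⟨2 ^ |s|, Real.rpow_pos_of_pos two_pos _, fun a f hf => ?_⟩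
  obtain ⟨hdiff, hint⟩ := hf
  set K : ℝ := (1 + ‖a‖) ^ (2 * |s|) with hK
  have hK0 : 0 ≤ K := Real.rpow_nonneg (by positivity) _
  have hshift : Integrable (fun z => fockIntegrand s f (z - a)) volume :=
    hint.comp_sub_right a
  have hWdiff : Differentiable ℂ (weylOp a f) := weyl_differentiable a hdiff
  have hWint : Integrable (fockIntegrand s (weylOp a f)) volume := by
    apply Integrable.mono' (hshift.const_mul K)
    · exact (fockIntegrand_continuous s hWdiff.continuous).aestronglyMeasurable
    · filter_upwards with z
      rw [Real.norm_of_nonneg (fockIntegrand_nonneg s _ z)]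
      exact weyl_dominated s a f z
  refine ⟨⟨hWdiff, hWint⟩, ?_⟩
  have hIineq : (∫ z : Cn n, fockIntegrand s (weylOp a f) z)
      ≤ K * ∫ z : Cn n, fockIntegrand s f z := by
    calc (∫ z : Cn n, fockIntegrand s (weylOp a f) z)
        ≤ ∫ z : Cn n, K * fockIntegrand s f (z - a) :=
          integral_mono hWint (hshift.const_mul K) (weyl_dominated s a f)
      _ = K * ∫ z : Cn n, fockIntegrand s f (z - a) := integral_const_mul _ _
      _ = K * ∫ z : Cn n, fockIntegrand s f z := by
          rw [integral_sub_right_eq_self (fockIntegrand s f) a]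
  have hsqrtK : Real.sqrt K = (1 + ‖a‖) ^ |s| := by
    rw [hK]
    have : (1 + ‖a‖) ^ (2 * |s|) = ((1 + ‖a‖) ^ |s|) ^ 2 := by
      rw [← Real.rpow_natCast ((1 + ‖a‖) ^ |s|) 2, ← Real.rpow_mul (by positivity)]
      norm_num [mul_comm]
    rw [this, Real.sqrt_sq (Real.rpow_nonneg (by positivity) _)]
  have step1 : FockNorm s (weylOp a f) ≤ (1 + ‖a‖) ^ |s| * FockNorm s f := by
    unfold FockNorm
    calc Real.sqrt (∫ z : Cn n, fockIntegrand s (weylOp a f) z)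
        ≤ Real.sqrt (K * ∫ z : Cn n, fockIntegrand s f z) :=
          Real.sqrt_le_sqrt hIineq
      _ = Real.sqrt K * Real.sqrt (∫ z : Cn n, fockIntegrand s f z) :=
          Real.sqrt_mul hK0 _
      _ = (1 + ‖a‖) ^ |s| * Real.sqrt (∫ z : Cn n, fockIntegrand s f z) := by
          rw [hsqrtK]
  have hcoef : (1 + ‖a‖) ^ |s| ≤ 2 ^ |s| * (1 + ‖a‖ ^ |s|) :=
    one_add_rpow_le (norm_nonneg a) (abs_nonneg s)
  calc FockNorm s (weylOp a f) ≤ (1 + ‖a‖) ^ |s| * FockNorm s f := step1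
    _ ≤ (2 ^ |s| * (1 + ‖a‖ ^ |s|)) * FockNorm s f :=
        mul_le_mul_of_nonneg_right hcoef (Real.sqrt_nonneg _)
    _ = 2 ^ |s| * (1 + ‖a‖ ^ |s|) * FockNorm s f := by ring

end
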